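/- arXiv:2201.09267 — 4 statements merged into one kernel-verified Lean document; each statement's English description precedes it below -/
import Mathlib

section
/- Let Σ_S, Σ_D ∈ ℝ^{d×d} be symmetric matrices with Σ_S positive definite and Σ_D positive semidefinite and nonzero. Then the trace-ratio objective tr(W Σ_D) / tr(W Σ_S) over symmetric positive semidefinite W is maximized by a rank-one matrix: there exists u ∈ ℝ^d with u ≠ 0 such that for every symmetric positive semidefinite matrix W ≠ 0, tr(W Σ_D) / tr(W Σ_S) ≤ (uᵀ Σ_D u) / (uᵀ Σ_S u). (Note that for W = u uᵀ the ratio equals (uᵀ Σ_D u)/(uᵀ Σ_S u), so the supremum is attained at a rank-one positive semidefinite matrix.) -/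
/-!
Factor `W = Bᵀ B`. Then `tr (W M) = ∑ i, bᵢᵀ M bᵢ` over the rows `bᵢ` of `B`, so
`tr (W Σ_D) / tr (W Σ_S)` is a mediant of the generalized Rayleigh quotients
`bᵢᵀ Σ_D bᵢ / bᵢᵀ Σ_S bᵢ` and is bounded by their maximum. The quotient is invariant
under scaling, so this maximum exists: it is attained on the compact unit sphere.
-/

open Matrix

namespace Matrix

variable {m n : Type*} [Fintype m] [Fintype n]

theorem trace_transpose_mul_self_mul {R : Type*} [CommSemiring R] (B : Matrix m n R)
    (M : Matrix n n R) : (Bᵀ * B * M).trace = ∑ i, B i ⬝ᵥ M *ᵥ B i := by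
  rw [Matrix.mul_assoc, trace_mul_comm]
  refine Finset.sum_congr rfl fun i _ => ?_
  simp only [diag, mul_apply, transpose_apply, dotProduct, mulVec, Finset.sum_mul,
    Finset.mul_sum]
  rw [Finset.sum_comm]
  exact Finset.sum_congr rfl fun j _ => Finset.sum_congr rfl fun k _ => by ring

theorem trace_vecMulVec_mul {R : Type*} [CommSemiring R] (u w : n → R) (M : Matrix n n R) :
    (vecMulVec u w * M).trace = w ⬝ᵥ M *ᵥ u := by
  rw [vecMulVec_mul, trace_vecMulVec, dotProduct_mulVec, dotProduct_comm]

open scoped MatrixOrder Matrix.Norms.L2Operator in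
theorem PosSemidef.exists_eq_transpose_mul_self {W : Matrix n n ℝ} (hW : W.PosSemidef) :
    ∃ B : Matrix n n ℝ, W = Bᵀ * B := by
  classical
  obtain ⟨B, rfl⟩ := CStarAlgebra.nonneg_iff_eq_star_mul_self.mp hW.nonneg
  exact ⟨B, by rw [star_eq_conjTranspose, conjTranspose_eq_transpose_of_trivial]⟩

theorem PosDef.dotProduct_mulVec_pos_real {S : Matrix n n ℝ} (hS : S.PosDef) {v : n → ℝ}
    (hv : v ≠ 0) : 0 < v ⬝ᵥ S *ᵥ v := by
  simpa only [star_trivial] using hS.dotProduct_mulVec_pos hv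

theorem PosSemidef.trace_mul_pos {W S : Matrix n n ℝ} (hW : W.PosSemidef) (hW0 : W ≠ 0)
    (hS : S.PosDef) : 0 < (W * S).trace := by
  obtain ⟨B, rfl⟩ := hW.exists_eq_transpose_mul_self
  obtain ⟨i, hi⟩ : ∃ i, B i ≠ 0 := by
    by_contra! h
    exact hW0 (by rw [show B = 0 from funext h, Matrix.mul_zero])
  rw [trace_transpose_mul_self_mul]
  refine Finset.sum_pos' (fun j _ => ?_) ⟨i, Finset.mem_univ _, hS.dotProduct_mulVec_pos_real hi⟩
  simpa only [star_trivial] using hS.posSemidef.dotProduct_mulVec_nonneg (B j)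

theorem PosSemidef.trace_mul_le_mul_trace_mul {W D S : Matrix n n ℝ} {c : ℝ}
    (hW : W.PosSemidef) (h : ∀ v, v ⬝ᵥ D *ᵥ v ≤ c * (v ⬝ᵥ S *ᵥ v)) :
    (W * D).trace ≤ c * (W * S).trace := by
  obtain ⟨B, rfl⟩ := hW.exists_eq_transpose_mul_self
  rw [trace_transpose_mul_self_mul, trace_transpose_mul_self_mul, Finset.mul_sum]
  exact Finset.sum_le_sum fun i _ => h (B i)

noncomputable def rayleighQuotient (D S : Matrix n n ℝ) (v : n → ℝ) : ℝ :=
  (v ⬝ᵥ D *ᵥ v) / (v ⬝ᵥ S *ᵥ v)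

theorem rayleighQuotient_smul (D S : Matrix n n ℝ) {c : ℝ} (hc : c ≠ 0) (v : n → ℝ) :
    rayleighQuotient D S (c • v) = rayleighQuotient D S v := by
  simp only [rayleighQuotient, mulVec_smul, dotProduct_smul, smul_dotProduct, smul_eq_mul,
    ← mul_assoc]
  exact mul_div_mul_left _ _ (mul_ne_zero hc hc)

theorem PosDef.exists_ne_zero_isMaxOn_rayleighQuotient [Nonempty n] (D : Matrix n n ℝ)
    {S : Matrix n n ℝ} (hS : S.PosDef) :
    ∃ u ≠ 0, IsMaxOn (rayleighQuotient D S) {0}ᶜ u := by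
  have hcont : ContinuousOn (rayleighQuotient D S) (Metric.sphere 0 1) := by
    refine ContinuousOn.div (by fun_prop) (by fun_prop) fun v hv => ?_
    exact (hS.dotProduct_mulVec_pos_real (ne_zero_of_mem_unit_sphere ⟨v, hv⟩)).ne'
  obtain ⟨u, hu, hmax⟩ := (isCompact_sphere (0 : n → ℝ) 1).exists_isMaxOn
    (NormedSpace.sphere_nonempty.mpr zero_le_one) hcont
  refine ⟨u, ne_zero_of_mem_unit_sphere ⟨u, hu⟩, fun v (hv : v ≠ 0) => ?_⟩
  change rayleighQuotient D S v ≤ rayleighQuotient D S u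
  rw [← rayleighQuotient_smul D S (inv_ne_zero (norm_ne_zero_iff.mpr hv)) v]
  exact hmax (by simp [norm_smul, hv])

theorem PosDef.dotProduct_mulVec_le_mul_of_rayleighQuotient_le {D S : Matrix n n ℝ}
    (hS : S.PosDef) {c : ℝ} (h : ∀ v ≠ 0, rayleighQuotient D S v ≤ c) (v : n → ℝ) :
    v ⬝ᵥ D *ᵥ v ≤ c * (v ⬝ᵥ S *ᵥ v) := by
  rcases eq_or_ne v 0 with rfl | hv
  · simp
  · exact (div_le_iff₀ (hS.dotProduct_mulVec_pos_real hv)).mp (h v hv)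

end Matrix

theorem trace_ratio_rank_one_maximizer_general (d : ℕ)
    (SigS SigD : Matrix (Fin d) (Fin d) ℝ)
    (hS : SigS.PosDef) (hD0 : SigD ≠ 0) :
    ∃ u : Fin d → ℝ, u ≠ 0 ∧
      (∀ W : Matrix (Fin d) (Fin d) ℝ, W.PosSemidef → W ≠ 0 →
        (W * SigD).trace / (W * SigS).trace ≤
          (u ⬝ᵥ SigD.mulVec u) / (u ⬝ᵥ SigS.mulVec u)) ∧
      (vecMulVec u u * SigD).trace / (vecMulVec u u * SigS).trace
        = (u ⬝ᵥ SigD.mulVec u) / (u ⬝ᵥ SigS.mulVec u) := by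
  have : Nonempty (Fin d) := by
    by_contra! h
    exact hD0 (Subsingleton.elim _ _)
  obtain ⟨u, hu0, hmax⟩ := hS.exists_ne_zero_isMaxOn_rayleighQuotient SigD
  refine ⟨u, hu0, fun W hW hW0 => ?_, by rw [trace_vecMulVec_mul, trace_vecMulVec_mul]⟩
  rw [div_le_iff₀ (hW.trace_mul_pos hW0 hS)]
  exact hW.trace_mul_le_mul_trace_mul
    (hS.dotProduct_mulVec_le_mul_of_rayleighQuotient_le fun v hv => hmax hv)

/-- For symmetric matrices `Σ_S` positive definite and `Σ_D` positive
semidefinite and nonzero, the trace-ratio objective `tr(W Σ_D)/tr(W Σ_S)` over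
nonzero symmetric positive semidefinite `W` is maximized by a rank-one matrix:
there is a nonzero vector `u` bounding the ratio by `(uᵀ Σ_D u)/(uᵀ Σ_S u)`,
and for `W = u uᵀ` the ratio attains this value. -/
theorem trace_ratio_rank_one_maximizer (d : ℕ)
    (SigS SigD : Matrix (Fin d) (Fin d) ℝ)
    (hS : SigS.PosDef) (hD : SigD.PosSemidef) (hD0 : SigD ≠ 0) :
    ∃ u : Fin d → ℝ, u ≠ 0 ∧
      (∀ W : Matrix (Fin d) (Fin d) ℝ, W.PosSemidef → W ≠ 0 →
        (W * SigD).trace / (W * SigS).trace ≤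
          (u ⬝ᵥ SigD.mulVec u) / (u ⬝ᵥ SigS.mulVec u)) ∧
      (vecMulVec u u * SigD).trace / (vecMulVec u u * SigS).trace
        = (u ⬝ᵥ SigD.mulVec u) / (u ⬝ᵥ SigS.mulVec u) :=
  trace_ratio_rank_one_maximizer_general d SigS SigD hS hD0
end

section
/- Let Φ ∈ ℝ^{D×n} be a matrix with columns φ_1, …, φ_n, let T ∈ ℝ^{n×p}, and set U := Φ T and K := Φᵀ Φ with columns k_1, …, k_n (so k_i = Φᵀ φ_i). Then for all indices i, j, the generalized Mahalanobis distance in the feature space with weight matrix U Uᵀ equals a generalized Mahalanobis distance between kernel vectors with weight matrix T Tᵀ: (φ_i − φ_j)ᵀ (U Uᵀ) (φ_i − φ_j) = (k_i − k_j)ᵀ (T Tᵀ) (k_i − k_j). -/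
open Matrix

namespace Matrix

variable {R m n : Type*} [CommSemiring R] [Fintype m]

theorem dotProduct_mul_mul_transpose_mulVec [Fintype n] (Φ : Matrix m n R) (W : Matrix n n R)
    (x : m → R) :
    x ⬝ᵥ ((Φ * W * Φᵀ) *ᵥ x) = (Φᵀ *ᵥ x) ⬝ᵥ (W *ᵥ (Φᵀ *ᵥ x)) := by
  rw [← mulVec_mulVec, ← mulVec_mulVec, dotProduct_mulVec, mulVec_transpose]

theorem transpose_transpose_mul_self_apply (Φ : Matrix m n R) (i : n) :
    (Φᵀ * Φ)ᵀ i = Φᵀ *ᵥ Φᵀ i := by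
  rw [transpose_mul, transpose_transpose, mul_apply_eq_vecMul, mulVec_transpose]

end Matrix

/-- Kernelization of the generalized Mahalanobis distance: with `U = Φ T`,
`K = Φᵀ Φ`, columns `φ_i = Φᵀ i` and kernel vectors `k_i = Kᵀ i = Φᵀ φ_i`,
the distance in feature space with weight `U Uᵀ` equals the distance between
kernel vectors with weight `T Tᵀ`:
`(φ_i − φ_j)ᵀ (U Uᵀ) (φ_i − φ_j) = (k_i − k_j)ᵀ (T Tᵀ) (k_i − k_j)`. -/
theorem kernelized_mahalanobis (D n p : ℕ)
    (Φ : Matrix (Fin D) (Fin n) ℝ) (T : Matrix (Fin n) (Fin p) ℝ) :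
    ∀ i j : Fin n,
      (Φᵀ i - Φᵀ j) ⬝ᵥ (((Φ * T) * (Φ * T)ᵀ).mulVec (Φᵀ i - Φᵀ j)) =
        ((Φᵀ * Φ)ᵀ i - (Φᵀ * Φ)ᵀ j) ⬝ᵥ
          ((T * Tᵀ).mulVec ((Φᵀ * Φ)ᵀ i - (Φᵀ * Φ)ᵀ j)) := by
  intro i j
  have hU : (Φ * T) * (Φ * T)ᵀ = Φ * (T * Tᵀ) * Φᵀ := by
    simp only [transpose_mul, Matrix.mul_assoc]
  rw [transpose_transpose_mul_self_apply, transpose_transpose_mul_self_apply, ← mulVec_sub, hU,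
    dotProduct_mul_mul_transpose_mulVec]
end

section
/- Let x_1, …, x_n ∈ ℝ^d with n ≥ 2, and let p⁰_{ij} ≥ 0 for all ordered pairs i ≠ j. For W ∈ ℝ^{d×d}, define r_{ij}(W) := (x_i − x_j)ᵀ W (x_i − x_j) and Z_i(W) := Σ_{k ≠ i} exp(−r_{ik}(W)). Then the collapsing-classes objective W ↦ Σ_{i ≠ j} p⁰_{ij} (r_{ij}(W) + log Z_i(W)) is a convex function on the real vector space of d×d matrices. -/
/-!
Each summand is `p⁰ᵢⱼ ≥ 0` times the sum of the linear function `rᵢⱼ` and the log-sum-exp of the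
linear functions `W ↦ -rᵢₖ(W)`, so it suffices that log-sum-exp is convex. Let `c` be the convex
combination `a lse(u) + b lse(v)` and `w = a u + b v`; by convexity of `exp`, `exp (wₖ - c)` is
bounded by the same combination of the softmax weights `exp (uₖ - lse u)` and `exp (vₖ - lse v)`,
each of which sums to `1`, hence `∑ₖ exp (wₖ - c) ≤ 1`, i.e. `lse(w) ≤ c`.
-/

open Matrix Finset Real

theorem convexOn_finset_sum {𝕜 E β ι : Type*} [Semiring 𝕜] [PartialOrder 𝕜] [AddCommMonoid E]
    [AddCommMonoid β] [PartialOrder β] [IsOrderedAddMonoid β] [SMul 𝕜 E] [Module 𝕜 β]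
    {t : Set E} (ht : Convex 𝕜 t) (s : Finset ι) {f : ι → E → β}
    (hf : ∀ i ∈ s, ConvexOn 𝕜 t (f i)) : ConvexOn 𝕜 t fun v => ∑ i ∈ s, f i v := by
  induction s using Finset.cons_induction with
  | empty => simpa using convexOn_const (0 : β) ht
  | cons i s _ ih =>
    simp only [sum_cons]
    exact (hf i (mem_cons_self i s)).add (ih fun j hj => hf j (mem_cons_of_mem hj))

section LogSumExp

variable {ι : Type*} {s : Finset ι}

noncomputable def logSumExp (s : Finset ι) (z : ι → ℝ) : ℝ :=
  log (∑ k ∈ s, exp (z k))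

theorem sum_exp_pos (hs : s.Nonempty) (z : ι → ℝ) : 0 < ∑ k ∈ s, exp (z k) :=
  sum_pos (fun k _ => exp_pos (z k)) hs

theorem sum_exp_sub_logSumExp (hs : s.Nonempty) (z : ι → ℝ) :
    ∑ k ∈ s, exp (z k - logSumExp s z) = 1 := by
  simp_rw [exp_sub, ← sum_div, logSumExp, exp_log (sum_exp_pos hs z)]
  exact div_self (sum_exp_pos hs z).ne'

theorem logSumExp_le_of_sum_exp_sub_le_one (hs : s.Nonempty) {z : ι → ℝ} {c : ℝ}
    (h : ∑ k ∈ s, exp (z k - c) ≤ 1) : logSumExp s z ≤ c := by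
  simp_rw [exp_sub, ← sum_div] at h
  rw [logSumExp, log_le_iff_le_exp (sum_exp_pos hs z)]
  exact (div_le_one (exp_pos c)).1 h

theorem convexOn_logSumExp (hs : s.Nonempty) : ConvexOn ℝ Set.univ (logSumExp s) := by
  refine ⟨convex_univ, fun u _ v _ a b ha hb hab => ?_⟩
  apply logSumExp_le_of_sum_exp_sub_le_one hs
  calc ∑ k ∈ s, exp ((a • u + b • v) k - (a • logSumExp s u + b • logSumExp s v))
      = ∑ k ∈ s, exp (a • (u k - logSumExp s u) + b • (v k - logSumExp s v)) := by
        refine sum_congr rfl fun k _ => ?_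
        simp only [Pi.add_apply, Pi.smul_apply, smul_eq_mul]
        ring_nf
    _ ≤ ∑ k ∈ s, (a • exp (u k - logSumExp s u) + b • exp (v k - logSumExp s v)) :=
        sum_le_sum fun k _ => convexOn_exp.2 trivial trivial ha hb hab
    _ = 1 := by
        simp only [smul_eq_mul, sum_add_distrib, ← mul_sum, sum_exp_sub_logSumExp hs, mul_one, hab]

end LogSumExp

def quadFormAt {m R : Type*} [Fintype m] [CommSemiring R] (u : m → R) : Matrix m m R →ₗ[R] R where
  toFun W := u ⬝ᵥ W *ᵥ u
  map_add' A B := by simp only [add_mulVec, dotProduct_add]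
  map_smul' c A := by simp only [smul_mulVec, dotProduct_smul, RingHom.id_apply]

theorem collapsing_classes_convex_general (d n : ℕ)
    (x : Fin n → Fin d → ℝ) (p0 : Fin n → Fin n → ℝ)
    (h0 : ∀ i j, i ≠ j → 0 ≤ p0 i j) :
    ConvexOn ℝ Set.univ
      (fun W : Matrix (Fin d) (Fin d) ℝ =>
        ∑ i, ∑ j ∈ Finset.univ.erase i,
          p0 i j * ((x i - x j) ⬝ᵥ W.mulVec (x i - x j) +
            Real.log (∑ k ∈ Finset.univ.erase i,
              Real.exp (-((x i - x k) ⬝ᵥ W.mulVec (x i - x k)))))) := by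
  refine convexOn_finset_sum convex_univ _ fun i _ =>
    convexOn_finset_sum convex_univ _ fun j hj => ?_
  have hlog := (convexOn_logSumExp ⟨j, hj⟩).comp_linearMap
    (LinearMap.pi fun k => -quadFormAt (x i - x k))
  have hlin := (quadFormAt (x i - x j)).convexOn convex_univ
  exact (hlin.add hlog).smul (h0 i j (ne_of_mem_erase hj).symm)

/-- The collapsing-classes objective
`W ↦ Σ_{i ≠ j} p⁰_{ij} (r_{ij}(W) + log Z_i(W))`, with
`r_{ij}(W) = (x_i − x_j)ᵀ W (x_i − x_j)` and
`Z_i(W) = Σ_{k ≠ i} exp(−r_{ik}(W))`, is convex on the space of real `d×d`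
matrices. -/
theorem collapsing_classes_convex (d n : ℕ) (hn : 2 ≤ n)
    (x : Fin n → Fin d → ℝ) (p0 : Fin n → Fin n → ℝ)
    (h0 : ∀ i j, i ≠ j → 0 ≤ p0 i j) :
    ConvexOn ℝ Set.univ
      (fun W : Matrix (Fin d) (Fin d) ℝ =>
        ∑ i, ∑ j ∈ Finset.univ.erase i,
          p0 i j * ((x i - x j) ⬝ᵥ W.mulVec (x i - x j) +
            Real.log (∑ k ∈ Finset.univ.erase i,
              Real.exp (-((x i - x k) ⬝ᵥ W.mulVec (x i - x k)))))) :=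
  collapsing_classes_convex_general d n x p0 h0
end

section
/- Let x_1, …, x_n ∈ ℝ^d, and for each i let S_i ⊆ {1,…,n} \ {i} be a set of indices of similar points. For U ∈ ℝ^{d×p}, define r_{ij}(U) := ‖Uᵀ(x_i − x_j)‖₂², p_{ij}(U) := exp(−r_{ij}(U)) / Σ_{k ≠ i} exp(−r_{ik}(U)) for j ≠ i, p_i(U) := Σ_{j ∈ S_i} p_{ij}(U), and the NCA objective f(U) := Σ_{i=1}^n p_i(U). Let A_{ij} := (x_i − x_j)(x_i − x_j)ᵀ. Then f is Fréchet differentiable at every U, and its gradient (the matrix G ∈ ℝ^{d×p} such that the derivative in direction H is Σ_{k,l} G_{kl} H_{kl}) equals G = 2 Σ_{i=1}^n ( p_i(U) Σ_{k ≠ i} p_{ik}(U) A_{ik} − Σ_{j ∈ S_i} p_{ij}(U) A_{ij} ) U. -/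
/-
Each `p_{ij}` is a Gibbs weight `exp (-r_{ij}) / ∑_{k ≠ i} exp (-r_{ik})
= exp (-r_{ij} - log ∑_{k ≠ i} exp (-r_{ik}))`, so its differential is
`p_{ij} (∑_{k ≠ i} p_{ik} dr_{ik} - dr_{ij})`; the positivity of the normaliser, which the
logarithm needs, comes from `j ∈ S i ⊆ {k | k ≠ i}`. The quadratic form
`r_{ij}(U) = ‖Uᵀ(x_i − x_j)‖²` has gradient `2 A_{ij} U`. Summing over `j ∈ S i` and `i`, the
gradient `G` is collected by linearity of the Frobenius pairing `H ↦ ∑ G_{kl} H_{kl}`.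
-/

open Matrix Finset

/-- Squared in-subspace distance `r_{ij}(U) = ‖Uᵀ(x_i − x_j)‖₂²`. -/
noncomputable def ncaR {d p n : ℕ} (x : Fin n → Fin d → ℝ)
    (U : Fin d → Fin p → ℝ) (i j : Fin n) : ℝ :=
  ∑ l, (∑ k, U k l * (x i k - x j k)) ^ 2

/-- NCA softmax neighborhood probability
`p_{ij}(U) = exp(−r_{ij}(U)) / Σ_{k ≠ i} exp(−r_{ik}(U))` (for `j ≠ i`). -/
noncomputable def ncaP {d p n : ℕ} (x : Fin n → Fin d → ℝ)
    (U : Fin d → Fin p → ℝ) (i j : Fin n) : ℝ :=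
  Real.exp (-(ncaR x U i j)) /
    ∑ k ∈ Finset.univ.erase i, Real.exp (-(ncaR x U i k))

section Frobenius

variable {m k : Type*}

noncomputable def entryCLM (a : m) (b : k) : (m → k → ℝ) →L[ℝ] ℝ :=
  (ContinuousLinearMap.proj (R := ℝ) (φ := fun _ : k => ℝ) b).comp
    (ContinuousLinearMap.proj (R := ℝ) (φ := fun _ : m => k → ℝ) a)

@[simp] theorem entryCLM_apply (a : m) (b : k) (H : m → k → ℝ) : entryCLM a b H = H a b := rfl

variable [Fintype m] [Fintype k]

noncomputable def frobeniusPairing : Matrix m k ℝ →ₗ[ℝ] (m → k → ℝ) →L[ℝ] ℝ where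
  toFun G := ∑ a, ∑ b, G a b • entryCLM a b
  map_add' G G' := by simp only [Matrix.add_apply, add_smul, Finset.sum_add_distrib]
  map_smul' c G := by
    simp only [Matrix.smul_apply, smul_eq_mul, mul_smul, Finset.smul_sum, RingHom.id_apply]

@[simp]
theorem frobeniusPairing_apply (G : Matrix m k ℝ) (H : m → k → ℝ) :
    frobeniusPairing G H = ∑ a, ∑ b, G a b * H a b := by
  simp [frobeniusPairing]

theorem hasFDerivAt_sum_sq_vecMul (c : m → ℝ) (U : m → k → ℝ) :
    HasFDerivAt (fun V : m → k → ℝ => ∑ l, (∑ a, V a l * c a) ^ 2)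
      (frobeniusPairing ((2 : ℝ) • vecMulVec c c * of U)) U := by
  have h := HasFDerivAt.fun_sum (u := univ) fun l _ =>
    (HasFDerivAt.fun_sum (u := univ) fun a _ =>
      ((entryCLM a l).hasFDerivAt (x := U)).mul_const (c a)).pow 2
  refine h.congr_fderiv ?_
  ext H
  simp only [entryCLM_apply, Nat.add_one_sub_one, pow_one, nsmul_eq_mul, Nat.cast_ofNat, mul_sum,
    _root_.sum_apply, _root_.smul_apply, smul_eq_mul, sum_mul, smul_mul, map_smul,
    frobeniusPairing_apply, Matrix.mul_apply, vecMulVec_apply, of_apply]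
  rw [Finset.sum_comm]
  exact sum_congr rfl fun _ _ => sum_congr rfl fun _ _ => sum_congr rfl fun _ _ => by ring

end Frobenius

section Gibbs

variable {ι : Type*}

noncomputable def gibbs (s : Finset ι) (z : ι → ℝ) (j : ι) : ℝ :=
  Real.exp (-z j) / ∑ k ∈ s, Real.exp (-z k)

theorem sum_exp_neg_pos {s : Finset ι} (z : ι → ℝ) {j : ι} (hj : j ∈ s) :
    0 < ∑ k ∈ s, Real.exp (-z k) :=
  Finset.sum_pos (fun _ _ => Real.exp_pos _) ⟨j, hj⟩

theorem gibbs_eq_exp_sub_log {s : Finset ι} (z : ι → ℝ) {j : ι} (hj : j ∈ s) :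
    gibbs s z j = Real.exp (-z j - Real.log (∑ k ∈ s, Real.exp (-z k))) := by
  rw [Real.exp_sub, Real.exp_log (sum_exp_neg_pos z hj), gibbs]

variable {E : Type*} [NormedAddCommGroup E] [NormedSpace ℝ E]
  {r : ι → E → ℝ} {r' : ι → E →L[ℝ] ℝ} {u : E} {s : Finset ι}

theorem hasFDerivAt_gibbs (hr : ∀ k ∈ s, HasFDerivAt (r k) (r' k) u) {j : ι} (hj : j ∈ s) :
    HasFDerivAt (fun v => gibbs s (r · v) j)
      (gibbs s (r · u) j • (∑ k ∈ s, gibbs s (r · u) k • r' k - r' j)) u := by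
  have hD : HasFDerivAt (fun v => ∑ k ∈ s, Real.exp (-r k v))
      (∑ k ∈ s, Real.exp (-r k u) • -r' k) u :=
    HasFDerivAt.fun_sum fun k hk => (hr k hk).neg.exp
  have h := ((hr j hj).neg.sub (hD.log (sum_exp_neg_pos (r · u) hj).ne')).exp
  rw [funext fun v => gibbs_eq_exp_sub_log (r · v) hj, gibbs_eq_exp_sub_log _ hj]
  refine h.congr_fderiv ?_
  congr 1
  simp only [gibbs, Finset.smul_sum, smul_neg, smul_smul, Finset.sum_neg_distrib, inv_mul_eq_div]
  abel

theorem hasFDerivAt_sum_gibbs (hr : ∀ k ∈ s, HasFDerivAt (r k) (r' k) u) {t : Finset ι}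
    (ht : t ⊆ s) :
    HasFDerivAt (fun v => ∑ j ∈ t, gibbs s (r · v) j)
      ((∑ j ∈ t, gibbs s (r · u) j) • ∑ k ∈ s, gibbs s (r · u) k • r' k
        - ∑ j ∈ t, gibbs s (r · u) j • r' j) u := by
  have h := HasFDerivAt.fun_sum fun j hj => hasFDerivAt_gibbs hr (ht hj)
  refine h.congr_fderiv ?_
  simp only [smul_sub, Finset.sum_sub_distrib, Finset.sum_smul]

end Gibbs

theorem hasFDerivAt_ncaR {d p n : ℕ} (x : Fin n → Fin d → ℝ) (U : Fin d → Fin p → ℝ)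
    (i j : Fin n) :
    HasFDerivAt (fun V => ncaR x V i j)
      (frobeniusPairing ((2 : ℝ) • vecMulVec (x i - x j) (x i - x j) * of U)) U :=
  hasFDerivAt_sum_sq_vecMul (x i - x j) U

theorem ncaP_eq_gibbs {d p n : ℕ} (x : Fin n → Fin d → ℝ) (U : Fin d → Fin p → ℝ)
    (i j : Fin n) :
    ncaP x U i j = gibbs (univ.erase i) (ncaR x U i) j :=
  rfl

noncomputable def ncaGradient {d p n : ℕ} (x : Fin n → Fin d → ℝ)
    (S : Fin n → Finset (Fin n)) (U : Fin d → Fin p → ℝ) : Matrix (Fin d) (Fin p) ℝ :=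
  (2 : ℝ) • ∑ i,
    (((∑ j ∈ S i, ncaP x U i j) •
        ∑ k ∈ univ.erase i, ncaP x U i k • vecMulVec (x i - x k) (x i - x k))
      - ∑ j ∈ S i, ncaP x U i j • vecMulVec (x i - x j) (x i - x j)) * of U

theorem hasFDerivAt_sum_sum_ncaP {d p n : ℕ} (x : Fin n → Fin d → ℝ)
    {S : Fin n → Finset (Fin n)} (hS : ∀ i, i ∉ S i) (U : Fin d → Fin p → ℝ) :
    HasFDerivAt (fun V => ∑ i, ∑ j ∈ S i, ncaP x V i j)
      (frobeniusPairing (ncaGradient x S U)) U := by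
  have hf := HasFDerivAt.fun_sum (u := univ) fun i _ =>
    hasFDerivAt_sum_gibbs (fun k _ => hasFDerivAt_ncaR x U i k)
      (subset_erase.2 ⟨subset_univ _, hS i⟩)
  refine hf.congr_fderiv ?_
  simp only [ncaGradient, map_smul, map_sum, map_sub, Matrix.sub_mul, Matrix.sum_mul,
    Matrix.smul_mul, Finset.smul_sum, smul_sub, smul_smul, ncaP_eq_gibbs]
  refine sum_congr rfl fun i _ => ?_
  congr 1 <;> refine sum_congr rfl fun k _ => ?_ <;> congr 1 <;> ring

/-- The NCA objective `f(U) = Σᵢ pᵢ(U)`, with `pᵢ(U) = Σ_{j ∈ Sᵢ} p_{ij}(U)`,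
is Fréchet differentiable at every `U ∈ ℝ^{d×p}`, and its gradient matrix is
`G = 2 Σᵢ ( pᵢ(U) Σ_{k ≠ i} p_{ik}(U) A_{ik} − Σ_{j ∈ Sᵢ} p_{ij}(U) A_{ij} ) U`,
where `A_{ij} = (x_i − x_j)(x_i − x_j)ᵀ`; i.e. the derivative in direction `H`
equals `Σ_{k,l} G_{kl} H_{kl}`. -/
theorem nca_gradient (d p n : ℕ) (x : Fin n → Fin d → ℝ)
    (S : Fin n → Finset (Fin n)) (hS : ∀ i, i ∉ S i) :
    ∀ U : Fin d → Fin p → ℝ,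
      DifferentiableAt ℝ
        (fun V : Fin d → Fin p → ℝ => ∑ i, ∑ j ∈ S i, ncaP x V i j) U ∧
      ∀ H : Fin d → Fin p → ℝ,
        fderiv ℝ (fun V : Fin d → Fin p → ℝ => ∑ i, ∑ j ∈ S i, ncaP x V i j) U H =
          ∑ a, ∑ b,
            ((2 : ℝ) • ∑ i,
              (((∑ j ∈ S i, ncaP x U i j) •
                  ∑ k ∈ Finset.univ.erase i,
                    ncaP x U i k • vecMulVec (x i - x k) (x i - x k))
                - ∑ j ∈ S i, ncaP x U i j • vecMulVec (x i - x j) (x i - x j))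
                * Matrix.of U) a b * H a b := by
  intro U
  have hf := hasFDerivAt_sum_sum_ncaP x hS U
  exact ⟨hf.differentiableAt, fun H => by rw [hf.fderiv, frobeniusPairing_apply, ncaGradient]⟩
end
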